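/- arXiv:1110.1057 — 2 statements merged into one kernel-verified Lean document; each statement's English description precedes it below -/
import Mathlib

section
/- Let μ be a compactly supported Borel probability measure on ℝ^d, let ν be a σ-finite Borel measure on ℝ^d, and let (λ_n) be a sequence of Borel probability measures on ℝ^d forming an approximate identity, i.e. sup{‖t‖ : t ∈ supp λ_n} → 0 as n → ∞. If each convolution ν∗λ_n is a Bessel measure for μ with bound B independent of n, then ν is a Bessel measure for μ with bound B. If each ν∗λ_n is a frame measure for μ with bounds A, B independent of n, then ν is a frame measure for μ. -/
open MeasureTheory Filter Metric Complex Set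
open scoped ENNReal NNReal Real Topology

noncomputable section

/-- Euclidean space `ℝ^d`. -/
abbrev Ed (d : ℕ) := EuclideanSpace ℝ (Fin d)

/-- The Fourier transform of the measure `f dμ`:
`(f dμ)^(t) = ∫ f(x) e^{-2πi t·x} dμ(x)`. -/
def ftm {d : ℕ} (μ : Measure (Ed d)) (f : Ed d → ℂ) (t : Ed d) : ℂ :=
  ∫ x, f x * Complex.exp (-(2 * Real.pi * (inner ℝ t x : ℝ)) * Complex.I) ∂μ

/-- `ν` is a Bessel measure for `μ` with bound `B`:
`∫ |(f dμ)^(t)|² dν(t) ≤ B ‖f‖²_{L²(μ)}` for all `f ∈ L²(μ)`. -/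
def IsBesselBound {d : ℕ} (μ ν : Measure (Ed d)) (B : ℝ) : Prop :=
  ∀ f : Ed d → ℂ, MemLp f 2 μ →
    ∫⁻ t, (‖ftm μ f t‖₊ : ℝ≥0∞) ^ 2 ∂ν ≤ ENNReal.ofReal B * ∫⁻ x, (‖f x‖₊ : ℝ≥0∞) ^ 2 ∂μ

/-- `ν` is a frame measure for `μ` with bounds `A, B`:
`A ‖f‖²_{L²(μ)} ≤ ∫ |(f dμ)^(t)|² dν(t) ≤ B ‖f‖²_{L²(μ)}` for all `f ∈ L²(μ)`. -/
def IsFrameBounds {d : ℕ} (μ ν : Measure (Ed d)) (A B : ℝ) : Prop :=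
  ∀ f : Ed d → ℂ, MemLp f 2 μ →
    ENNReal.ofReal A * ∫⁻ x, (‖f x‖₊ : ℝ≥0∞) ^ 2 ∂μ ≤ ∫⁻ t, (‖ftm μ f t‖₊ : ℝ≥0∞) ^ 2 ∂ν ∧
    ∫⁻ t, (‖ftm μ f t‖₊ : ℝ≥0∞) ^ 2 ∂ν ≤ ENNReal.ofReal B * ∫⁻ x, (‖f x‖₊ : ℝ≥0∞) ^ 2 ∂μ

/-- The cube `x + R·Q` where `Q = [0,1)^d`. -/
def cube {d : ℕ} (x : Ed d) (R : ℝ) : Set (Ed d) := {y | ∀ i, y i ∈ Set.Ico (x i) (x i + R)}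

/-- The `α`-upper Beurling density `D_α(ν) = limsup_{R→∞} sup_x ν(x+RQ)/R^α`. -/
def beurlingDensity {d : ℕ} (ν : Measure (Ed d)) (α : ℝ) : ℝ≥0∞ :=
  limsup (fun R : ℝ => ⨆ x : Ed d, ν (cube x R) / ENNReal.ofReal (R ^ α)) atTop

/-- The upper Beurling dimension `dim ν = sup {α ≥ 0 : D_α(ν) = ∞}`. -/
def beurlingDim {d : ℕ} (ν : Measure (Ed d)) : ℝ≥0∞ :=
  ⨆ (α : ℝ) (_ : 0 ≤ α) (_ : beurlingDensity ν α = ∞), ENNReal.ofReal α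

/-- The `d`-lower Beurling density `D⁻(ν) = liminf_{R→∞} inf_x ν(x+RQ)/R^d`. -/
def lowerBeurlingDensity {d : ℕ} (ν : Measure (Ed d)) : ℝ≥0∞ :=
  liminf (fun R : ℝ => ⨅ x : Ed d, ν (cube x R) / ENNReal.ofReal (R ^ (d : ℝ))) atTop

/-!
The Fourier transform `F = (f dμ)^` of `f ∈ L²(μ)` is continuous, so `|F|²` is lower semicontinuous
and Fatou's lemma along the approximate identity gives
`∫ |F|² dν ≤ liminf ∫ |F|² d(ν ∗ λₙ)`; this is the Bessel bound.

For the lower frame bound, `F(t + s) - F(t)` is the transform of `f (e_s - 1)` with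
`e_s(x) = e^{-2πi s·x}`. As `μ` lives in a ball of radius `R`, this function has `L²(μ)` norm at
most `2π ‖s‖ R ‖f‖`, so the Bessel bound for `ν` gives
`∫ |F(t + s)|² dν(t) ≤ 2 ∫ |F|² dν + 2B (2π ‖s‖ R)² ‖f‖²`. Averaging over `s ∼ λₙ` with `n` large,
the error term is at most `A/2 ‖f‖²`, whence `∫ |F|² dν ≥ A/4 ‖f‖²`.
-/

open scoped FourierTransform InnerProductSpace

section ApproximateIdentity

variable {E : Type*} [SeminormedAddCommGroup E] [MeasurableSpace E]
  {lam : ℕ → Measure E} [∀ n, IsProbabilityMeasure (lam n)] {ε : ℕ → ℝ}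

theorem le_liminf_lintegral_add_of_lowerSemicontinuousAt {h : E → ℝ≥0∞} {t : E}
    (hh : LowerSemicontinuousAt h t) (hε : Tendsto ε atTop (𝓝 0))
    (hlam : ∀ n, ∀ᵐ s ∂lam n, s ∈ closedBall (0 : E) (ε n)) :
    h t ≤ liminf (fun n ↦ ∫⁻ s, h (t + s) ∂lam n) atTop := by
  refine le_of_forall_lt_imp_le_of_dense fun a ha ↦ le_liminf_of_le (by isBoundedDefault) ?_
  obtain ⟨δ, hδ, hball⟩ := Metric.eventually_nhds_iff.1 (hh a ha)
  filter_upwards [hε.eventually (gt_mem_nhds hδ)] with n hn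
  calc a = ∫⁻ _, a ∂lam n := by simp
    _ ≤ ∫⁻ s, h (t + s) ∂lam n := lintegral_mono_ae <| (hlam n).mono fun s hs ↦ by
        refine (hball ?_).le
        rw [dist_self_add_left, ← dist_zero_right]
        exact (mem_closedBall.1 hs).trans_lt hn

theorem lintegral_le_liminf_lintegral_conv [OpensMeasurableSpace E] [MeasurableAdd₂ E]
    {ν : Measure E} {h : E → ℝ≥0∞} (hh : LowerSemicontinuous h) (hε : Tendsto ε atTop (𝓝 0))
    (hlam : ∀ n, ∀ᵐ s ∂lam n, s ∈ closedBall (0 : E) (ε n)) :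
    ∫⁻ t, h t ∂ν ≤ liminf (fun n ↦ ∫⁻ t, h t ∂(ν ∗ lam n)) atTop := by
  simp_rw [Measure.lintegral_conv hh.measurable]
  calc ∫⁻ t, h t ∂ν ≤ ∫⁻ t, liminf (fun n ↦ ∫⁻ s, h (t + s) ∂lam n) atTop ∂ν :=
        lintegral_mono fun t ↦ le_liminf_lintegral_add_of_lowerSemicontinuousAt (hh t) hε hlam
    _ ≤ _ := lintegral_liminf_le fun n ↦ (hh.measurable.comp measurable_add).lintegral_prod_right'

end ApproximateIdentity

theorem enorm_add_sq_le {E : Type*} [SeminormedAddCommGroup E] (a b : E) :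
    ‖a + b‖ₑ ^ 2 ≤ 2 * (‖a‖ₑ ^ 2 + ‖b‖ₑ ^ 2) := by
  simp only [enorm_eq_nnnorm]
  exact_mod_cast (pow_le_pow_left₀ (by positivity) (nnnorm_add_le a b) 2).trans add_sq_le

theorem norm_fourierChar_smul_sub_le {E : Type*} [SeminormedAddCommGroup E] [NormedSpace ℂ E]
    (r : ℝ) (z : E) : ‖𝐞 r • z - z‖ ≤ 2 * π * |r| * ‖z‖ := by
  have h : ‖(𝐞 r : ℂ) - 1‖ ≤ 2 * π * |r| := by
    rw [Real.fourierChar_apply, mul_comm]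
    refine Real.norm_exp_I_mul_ofReal_sub_one_le.trans_eq ?_
    rw [Real.norm_eq_abs, abs_mul, abs_of_pos Real.two_pi_pos]
  have hsub : 𝐞 r • z - z = ((𝐞 r : ℂ) - 1) • z := by rw [Circle.smul_def, sub_smul, one_smul]
  rw [hsub, norm_smul]
  gcongr

section FourierChar

variable {V E : Type*} [NormedAddCommGroup V] [InnerProductSpace ℝ V] [MeasurableSpace V]
  [NormedAddCommGroup E] [NormedSpace ℂ E] {μ : Measure V} {f : V → E}

theorem MeasureTheory.MemLp.fourierChar_smul_sub [OpensMeasurableSpace V] (hf : MemLp f 2 μ)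
    (s : V) : MemLp (fun x ↦ 𝐞 (-⟪x, s⟫_ℝ) • f x - f x) 2 μ := by
  have hcont : Continuous fun x : V ↦ 𝐞 (-⟪x, s⟫_ℝ) := by fun_prop
  exact (hf.of_le (hcont.aestronglyMeasurable.smul hf.1)
    (ae_of_all _ fun x ↦ (Circle.norm_smul _ _).le)).sub hf

theorem lintegral_enorm_fourierChar_smul_sub_sq_le {R e : ℝ} (hμR : ∀ᵐ x ∂μ, ‖x‖ ≤ R) {s : V}
    (hs : ‖s‖ ≤ e) :
    ∫⁻ x, ‖𝐞 (-⟪x, s⟫_ℝ) • f x - f x‖ₑ ^ 2 ∂μ ≤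
      ENNReal.ofReal ((2 * π * e * R) ^ 2) * ∫⁻ x, ‖f x‖ₑ ^ 2 ∂μ := by
  rw [← lintegral_const_mul' _ _ ENNReal.ofReal_ne_top]
  refine lintegral_mono_ae (hμR.mono fun x hx ↦ ?_)
  have hle : ‖𝐞 (-⟪x, s⟫_ℝ) • f x - f x‖ ≤ 2 * π * e * R * ‖f x‖ := by
    refine (norm_fourierChar_smul_sub_le _ _).trans ?_
    rw [abs_neg, real_inner_comm]
    calc 2 * π * |⟪s, x⟫_ℝ| * ‖f x‖ ≤ 2 * π * (‖s‖ * ‖x‖) * ‖f x‖ := by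
          gcongr; exact abs_real_inner_le_norm s x
      _ ≤ 2 * π * (e * R) * ‖f x‖ := by
          gcongr; exact (norm_nonneg s).trans hs
      _ = 2 * π * e * R * ‖f x‖ := by ring
  rw [← ofReal_norm, ← ofReal_norm, ← ENNReal.ofReal_pow (norm_nonneg _),
    ← ENNReal.ofReal_pow (norm_nonneg _), ← ENNReal.ofReal_mul (by positivity), ← mul_pow]
  exact ENNReal.ofReal_le_ofReal (pow_le_pow_left₀ (norm_nonneg _) hle 2)

end FourierChar

section Fourier

variable {d : ℕ} {μ ν : Measure (Ed d)} {f : Ed d → ℂ}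

theorem ftm_eq_fourierIntegral (μ : Measure (Ed d)) (f : Ed d → ℂ) :
    ftm μ f = VectorFourier.fourierIntegral 𝐞 μ (innerₗ (Ed d)) f := by
  ext t
  rw [Real.vector_fourierIntegral_eq_integral_exp_smul, ftm]
  congr 1 with x
  rw [innerₗ_apply_apply, real_inner_comm, smul_eq_mul, mul_comm]
  push_cast
  ring_nf

theorem continuous_ftm (hf : Integrable f μ) : Continuous (ftm μ f) := by
  rw [ftm_eq_fourierIntegral]
  exact VectorFourier.fourierIntegral_continuous Real.continuous_fourierChar continuous_inner hf

theorem ftm_apply_add (hf : Integrable f μ) (t s : Ed d) :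
    ftm μ f (t + s) = ftm μ f t + ftm μ (fun x ↦ 𝐞 (-⟪x, s⟫_ℝ) • f x - f x) t := by
  have hdiff : Integrable (fun x ↦ 𝐞 (-⟪x, s⟫_ℝ) • f x - f x) μ :=
    ((Real.fourierIntegral_convergent_iff' (innerSL ℝ) s).2 hf).sub hf
  rw [ftm_eq_fourierIntegral, ftm_eq_fourierIntegral, ← Pi.add_apply,
    ← VectorFourier.fourierIntegral_add Real.continuous_fourierChar continuous_inner hf hdiff]
  simp only [VectorFourier.fourierIntegral, Pi.add_apply, innerₗ_apply_apply, inner_add_right,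
    neg_add, AddChar.map_add_eq_mul, mul_smul, add_sub_cancel]

theorem measurable_enorm_ftm_sq [IsFiniteMeasure μ] (hf : MemLp f 2 μ) :
    Measurable fun t ↦ ‖ftm μ f t‖ₑ ^ 2 :=
  (continuous_ftm (hf.integrable one_le_two)).measurable.enorm.pow_const 2

theorem lintegral_enorm_ftm_add_sq_le [IsFiniteMeasure μ] {B R e : ℝ} (hν : IsBesselBound μ ν B)
    (hμR : ∀ᵐ x ∂μ, ‖x‖ ≤ R) (hf : MemLp f 2 μ) {s : Ed d} (hs : ‖s‖ ≤ e) :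
    ∫⁻ t, ‖ftm μ f (t + s)‖ₑ ^ 2 ∂ν ≤ 2 * ∫⁻ t, ‖ftm μ f t‖ₑ ^ 2 ∂ν +
      ENNReal.ofReal (2 * B * (2 * π * e * R) ^ 2) * ∫⁻ x, ‖f x‖ₑ ^ 2 ∂μ := by
  set g := fun x ↦ 𝐞 (-⟪x, s⟫_ℝ) • f x - f x
  calc ∫⁻ t, ‖ftm μ f (t + s)‖ₑ ^ 2 ∂ν
      ≤ ∫⁻ t, 2 * (‖ftm μ f t‖ₑ ^ 2 + ‖ftm μ g t‖ₑ ^ 2) ∂ν := by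
        gcongr with t
        rw [ftm_apply_add (hf.integrable one_le_two)]
        exact enorm_add_sq_le _ _
    _ = 2 * ∫⁻ t, ‖ftm μ f t‖ₑ ^ 2 ∂ν + 2 * ∫⁻ t, ‖ftm μ g t‖ₑ ^ 2 ∂ν := by
        rw [lintegral_const_mul' _ _ ENNReal.ofNat_ne_top, lintegral_add_left
          (measurable_enorm_ftm_sq hf), mul_add]
    _ ≤ 2 * ∫⁻ t, ‖ftm μ f t‖ₑ ^ 2 ∂ν + 2 * (ENNReal.ofReal B *
          (ENNReal.ofReal ((2 * π * e * R) ^ 2) * ∫⁻ x, ‖f x‖ₑ ^ 2 ∂μ)) := by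
        gcongr
        exact (hν g (hf.fourierChar_smul_sub s)).trans
          (by gcongr; exact lintegral_enorm_fourierChar_smul_sub_sq_le hμR hs)
    _ = _ := by
        rw [ENNReal.ofReal_mul' (by positivity), ENNReal.ofReal_mul zero_le_two,
          ENNReal.ofReal_ofNat]
        ring

theorem lintegral_enorm_ftm_sq_conv_le [IsFiniteMeasure μ] [SFinite ν] {lam : Measure (Ed d)}
    [IsProbabilityMeasure lam] {B R e : ℝ} (hν : IsBesselBound μ ν B) (hμR : ∀ᵐ x ∂μ, ‖x‖ ≤ R)
    (hlam : ∀ᵐ s ∂lam, s ∈ closedBall (0 : Ed d) e) (hf : MemLp f 2 μ) :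
    ∫⁻ t, ‖ftm μ f t‖ₑ ^ 2 ∂(ν ∗ lam) ≤ 2 * ∫⁻ t, ‖ftm μ f t‖ₑ ^ 2 ∂ν +
      ENNReal.ofReal (2 * B * (2 * π * e * R) ^ 2) * ∫⁻ x, ‖f x‖ₑ ^ 2 ∂μ := by
  have hmeas := measurable_enorm_ftm_sq hf
  calc ∫⁻ t, ‖ftm μ f t‖ₑ ^ 2 ∂(ν ∗ lam)
      = ∫⁻ s, ∫⁻ t, ‖ftm μ f (t + s)‖ₑ ^ 2 ∂ν ∂lam := by
        rw [Measure.lintegral_conv hmeas, lintegral_lintegral_swap]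
        exact (hmeas.comp measurable_add).aemeasurable
    _ ≤ ∫⁻ _, (2 * ∫⁻ t, ‖ftm μ f t‖ₑ ^ 2 ∂ν +
          ENNReal.ofReal (2 * B * (2 * π * e * R) ^ 2) * ∫⁻ x, ‖f x‖ₑ ^ 2 ∂μ) ∂lam :=
        lintegral_mono_ae <| hlam.mono fun s hs ↦
          lintegral_enorm_ftm_add_sq_le hν hμR hf (mem_closedBall_zero_iff.1 hs)
    _ = _ := by simp

end Fourier

section Stability

variable {d : ℕ} {μ ν : Measure (Ed d)} {lam : ℕ → Measure (Ed d)}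
  [∀ n, IsProbabilityMeasure (lam n)] {ε : ℕ → ℝ}

theorem isBesselBound_of_conv [IsFiniteMeasure μ] (hε : Tendsto ε atTop (𝓝 0))
    (hlam : ∀ n, ∀ᵐ s ∂lam n, s ∈ closedBall (0 : Ed d) (ε n)) {B : ℝ}
    (hB : ∀ n, IsBesselBound μ (ν ∗ lam n) B) : IsBesselBound μ ν B := fun f hf ↦
  have hF : Continuous fun t ↦ ‖ftm μ f t‖ₑ ^ 2 :=
    (ENNReal.continuous_pow 2).comp (continuous_ftm (hf.integrable one_le_two)).enorm
  (lintegral_le_liminf_lintegral_conv hF.lowerSemicontinuous hε hlam).trans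
    (liminf_le_of_frequently_le' (.of_forall fun n ↦ hB n f hf))

theorem isFrameBounds_of_conv [IsFiniteMeasure μ] [SFinite ν] {R : ℝ} (hμR : ∀ᵐ x ∂μ, ‖x‖ ≤ R)
    (hε : Tendsto ε atTop (𝓝 0)) (hlam : ∀ n, ∀ᵐ s ∂lam n, s ∈ closedBall (0 : Ed d) (ε n))
    {A B : ℝ} (hA : 0 < A) (hF : ∀ n, IsFrameBounds μ (ν ∗ lam n) A B) :
    IsFrameBounds μ ν (A / 4) B := by
  have hν : IsBesselBound μ ν B := isBesselBound_of_conv hε hlam fun n f hf ↦ (hF n f hf).2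
  obtain ⟨n, hn⟩ : ∃ n, 2 * B * (2 * π * ε n * R) ^ 2 ≤ A / 2 := by
    have hcont : Continuous fun e : ℝ ↦ 2 * B * (2 * π * e * R) ^ 2 := by fun_prop
    exact ((hcont.tendsto' 0 0 (by simp)).comp hε |>.eventually
      (eventually_le_nhds (half_pos hA))).exists
  intro f hf
  refine ⟨?_, hν f hf⟩
  set T := ∫⁻ x, ‖f x‖ₑ ^ 2 ∂μ
  set a := ENNReal.ofReal (A / 4) * T
  have hT : T ≠ ∞ := by
    simpa using (lintegral_rpow_enorm_lt_top_of_eLpNorm_lt_top two_ne_zero ENNReal.ofNat_ne_top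
      hf.eLpNorm_lt_top).ne
  have hdouble (x : ℝ) (hx : 0 ≤ x) : ENNReal.ofReal (2 * x) = 2 * ENNReal.ofReal x := by
    rw [ENNReal.ofReal_mul zero_le_two, ENNReal.ofReal_ofNat]
  have hA2 : ENNReal.ofReal (A / 2) * T = 2 * a := by
    rw [← mul_assoc, ← hdouble _ (by positivity)]; ring_nf
  have hA4 : ENNReal.ofReal A * T = 2 * a + 2 * a := by
    rw [← two_mul, ← hA2, ← mul_assoc, ← hdouble _ (by positivity)]; ring_nf
  have hkey : 2 * a + 2 * a ≤ 2 * ∫⁻ t, ‖ftm μ f t‖ₑ ^ 2 ∂ν + 2 * a :=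
    calc 2 * a + 2 * a = ENNReal.ofReal A * T := hA4.symm
      _ ≤ ∫⁻ t, ‖ftm μ f t‖ₑ ^ 2 ∂(ν ∗ lam n) := (hF n f hf).1
      _ ≤ _ := (lintegral_enorm_ftm_sq_conv_le hν hμR (hlam n) hf).trans
        (by rw [← hA2]; gcongr)
  have ha : 2 * a ≠ ∞ := ENNReal.mul_ne_top ENNReal.ofNat_ne_top
    (ENNReal.mul_ne_top ENNReal.ofReal_ne_top hT)
  exact (ENNReal.mul_le_mul_iff_right two_ne_zero ENNReal.ofNat_ne_top).1
    (ENNReal.le_of_add_le_add_right ha hkey)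

end Stability

/-- Stability of Bessel/frame measures under approximate identities: if `ν∗λ_n` are
Bessel (resp. frame) measures for `μ` with uniform bounds, and the supports of the probability
measures `λ_n` shrink to `{0}`, then `ν` is a Bessel (resp. frame) measure for `μ`. -/
theorem stmt4 {d : ℕ} (μ : Measure (Ed d)) [IsProbabilityMeasure μ]
    (hμc : ∃ K : Set (Ed d), IsCompact K ∧ μ Kᶜ = 0)
    (ν : Measure (Ed d)) [SigmaFinite ν]
    (lam : ℕ → Measure (Ed d)) (hlam : ∀ n, IsProbabilityMeasure (lam n))
    (ε : ℕ → ℝ) (hε : Tendsto ε atTop (nhds 0))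
    (hsupp : ∀ n, (lam n) (Metric.closedBall (0 : Ed d) (ε n))ᶜ = 0) :
    (∀ B : ℝ, 0 < B → (∀ n, IsBesselBound μ (ν ∗ lam n) B) → IsBesselBound μ ν B) ∧
    (∀ A B : ℝ, 0 < A → 0 < B → (∀ n, IsFrameBounds μ (ν ∗ lam n) A B) →
      ∃ A' B' : ℝ, 0 < A' ∧ 0 < B' ∧ IsFrameBounds μ ν A' B') := by
  obtain ⟨K, hK, hKμ⟩ := hμc
  obtain ⟨R, hKR⟩ := hK.isBounded.subset_closedBall 0
  have hμR : ∀ᵐ x ∂μ, ‖x‖ ≤ R :=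
    (show ∀ᵐ x ∂μ, x ∈ K from mem_ae_iff.2 hKμ).mono fun x hx ↦ mem_closedBall_zero_iff.1 (hKR hx)
  have hsupp' : ∀ n, ∀ᵐ s ∂lam n, s ∈ closedBall (0 : Ed d) (ε n) := fun n ↦ mem_ae_iff.2 (hsupp n)
  exact ⟨fun B _ ↦ isBesselBound_of_conv hε hsupp', fun A B hA hB hF ↦
    ⟨A / 4, B, by positivity, hB, isFrameBounds_of_conv hμR hε hsupp' hA hF⟩⟩
end
end

section
/- If ν is a Bessel measure for a Borel probability measure μ on ℝ^d, then the Beurling dimension of ν satisfies dim ν ≤ d. -/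
open MeasureTheory Filter Metric Complex Set
open scoped ENNReal NNReal Real Topology

noncomputable section

/-!
Testing the Bessel inequality against the characters `e_s(x) = e^{2πi s·x}`, which have norm `1`
in `L²(μ)`, gives `∫ |μ̂(t - s)|² dν(t) ≤ B` for every `s`. Since `μ̂` is continuous with
`μ̂(0) = 1`, `|μ̂|² ≥ 1/2` on a ball of some radius `δ` around `0`, so `ν(B(s, δ)) ≤ 2B` for all `s`.
Covering `x + RQ` by `O(R^d)` cubes that fit in such balls gives `ν(x + RQ) = O(R^d)`, hence
`D_α(ν) < ∞` for every `α ≥ d`.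
-/

section Cubes

variable {d : ℕ}

theorem cube_subset_ball (x : Ed d) {r : ℝ} (hr : 0 < r) :
    cube x r ⊆ ball x ((d + 1) * r) := by
  intro y hy
  have hcoord : ∀ i, dist (y i) (x i) ^ 2 ≤ r ^ 2 := fun i => by
    obtain ⟨hxy, hyx⟩ := hy i
    rw [Real.dist_eq, sq_abs]
    nlinarith
  have hd : (d : ℝ) * r ^ 2 < ((d + 1) * r) ^ 2 := by nlinarith [sq_pos_of_pos hr]
  rw [mem_ball, EuclideanSpace.dist_eq, Real.sqrt_lt' (by positivity)]
  calc ∑ i, dist (y i) (x i) ^ 2 ≤ ∑ _i : Fin d, r ^ 2 := Finset.sum_le_sum fun i _ => hcoord i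
    _ = d * r ^ 2 := by simp
    _ < ((d + 1) * r) ^ 2 := hd

theorem cube_subset_iUnion_cube (x : Ed d) (R : ℝ) {r : ℝ} (hr : 0 < r) :
    cube x R ⊆ ⋃ k : Fin d → Fin ⌈R / r⌉₊, cube (WithLp.toLp 2 fun i => x i + k i * r) r := by
  intro y hy
  have hnonneg : ∀ i, 0 ≤ (y i - x i) / r := fun i => div_nonneg (by linarith [(hy i).1]) hr.le
  have hlt : ∀ i, ⌊(y i - x i) / r⌋₊ < ⌈R / r⌉₊ := fun i => by
    rw [Nat.lt_ceil]
    calc (⌊(y i - x i) / r⌋₊ : ℝ) ≤ (y i - x i) / r := Nat.floor_le (hnonneg i)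
      _ < R / r := by gcongr; linarith [(hy i).2]
  refine mem_iUnion.2 ⟨fun i => ⟨_, hlt i⟩, fun i => ?_⟩
  have hle : (⌊(y i - x i) / r⌋₊ : ℝ) * r ≤ y i - x i := (le_div_iff₀ hr).1 (Nat.floor_le (hnonneg i))
  have hgt : y i - x i < (⌊(y i - x i) / r⌋₊ + 1) * r :=
    (div_lt_iff₀ hr).1 (Nat.lt_floor_add_one _)
  simp only [mem_Ico]
  constructor <;> linarith

theorem measure_cube_le (ν : Measure (Ed d)) {r : ℝ} (hr : 0 < r) {M : ℝ≥0∞}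
    (hM : ∀ c, ν (cube c r) ≤ M) (x : Ed d) (R : ℝ) :
    ν (cube x R) ≤ (⌈R / r⌉₊ : ℝ≥0∞) ^ d * M :=
  calc ν (cube x R)
      ≤ ∑ k : Fin d → Fin ⌈R / r⌉₊, ν (cube (WithLp.toLp 2 fun i => x i + k i * r) r) :=
        (measure_mono (cube_subset_iUnion_cube x R hr)).trans (measure_iUnion_fintype_le _ _)
    _ ≤ ∑ _k : Fin d → Fin ⌈R / r⌉₊, M := Finset.sum_le_sum fun k _ => hM _
    _ = (⌈R / r⌉₊ : ℝ≥0∞) ^ d * M := by simp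

end Cubes

theorem natCeil_div_pow_le_rpow {r R α : ℝ} (d : ℕ) (hr : 0 < r) (hR : 1 ≤ R) (hα : d ≤ α) :
    (⌈R / r⌉₊ : ℝ) ^ d ≤ (r⁻¹ + 1) ^ d * R ^ α := by
  have hceil : (⌈R / r⌉₊ : ℝ) ≤ (r⁻¹ + 1) * R := by
    have := Nat.ceil_lt_add_one (div_nonneg (zero_le_one.trans hR) hr.le)
    rw [div_eq_inv_mul] at this ⊢
    nlinarith [inv_pos.2 hr]
  calc (⌈R / r⌉₊ : ℝ) ^ d ≤ ((r⁻¹ + 1) * R) ^ d := by gcongr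
    _ = (r⁻¹ + 1) ^ d * R ^ (d : ℝ) := by rw [mul_pow, Real.rpow_natCast]
    _ ≤ (r⁻¹ + 1) ^ d * R ^ α := by gcongr

section Dimension

variable {d : ℕ} (ν : Measure (Ed d))

theorem beurlingDensity_ne_top_of_measure_cube_le {r : ℝ} (hr : 0 < r) {M : ℝ≥0∞} (hM : M ≠ ∞)
    (h : ∀ c, ν (cube c r) ≤ M) {α : ℝ} (hα : d ≤ α) : beurlingDensity ν α ≠ ∞ := by
  set K := ENNReal.ofReal ((r⁻¹ + 1) ^ d) * M
  have hK : K ≠ ∞ := ENNReal.mul_ne_top ENNReal.ofReal_ne_top hM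
  have hbound : ∀ᶠ R in atTop, ⨆ x : Ed d, ν (cube x R) / ENNReal.ofReal (R ^ α) ≤ K := by
    filter_upwards [eventually_ge_atTop 1] with R hR
    refine iSup_le fun x => ENNReal.div_le_of_le_mul ?_
    have hpow : (⌈R / r⌉₊ : ℝ≥0∞) ^ d ≤ ENNReal.ofReal ((r⁻¹ + 1) ^ d) * ENNReal.ofReal (R ^ α) := by
      rw [← ENNReal.ofReal_mul (by positivity), ← ENNReal.ofReal_natCast, ← ENNReal.ofReal_pow
        (Nat.cast_nonneg _)]
      exact ENNReal.ofReal_le_ofReal (natCeil_div_pow_le_rpow d hr hR hα)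
    calc ν (cube x R) ≤ (⌈R / r⌉₊ : ℝ≥0∞) ^ d * M := measure_cube_le ν hr h x R
      _ ≤ ENNReal.ofReal ((r⁻¹ + 1) ^ d) * ENNReal.ofReal (R ^ α) * M := by gcongr
      _ = K * ENNReal.ofReal (R ^ α) := by ring
  exact ne_top_of_le_ne_top hK (limsup_le_of_le (by isBoundedDefault) hbound)

theorem beurlingDim_le_of_measure_ball_le {δ : ℝ} (hδ : 0 < δ) {M : ℝ≥0∞} (hM : M ≠ ∞)
    (h : ∀ s, ν (ball s δ) ≤ M) : beurlingDim ν ≤ d := by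
  have hr : 0 < δ / (d + 1) := by positivity
  have hcube : ∀ c, ν (cube c (δ / (d + 1))) ≤ M := fun c => by
    refine (measure_mono (cube_subset_ball c hr)).trans ?_
    rw [mul_div_cancel₀ _ (by positivity)]
    exact h c
  refine iSup_le fun α => iSup_le fun _ => iSup_le fun hdens => ?_
  rw [← ENNReal.ofReal_natCast]
  refine ENNReal.ofReal_le_ofReal (not_lt.1 fun hlt => ?_)
  exact beurlingDensity_ne_top_of_measure_cube_le ν hr hM hcube hlt.le hdens

end Dimension

theorem exists_forall_measure_ball_le_of_lintegral_sub_le {E : Type*} [NormedAddCommGroup E]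
    [MeasurableSpace E] [OpensMeasurableSpace E] (ν : Measure E) {g : E → ℂ}
    (hg : ContinuousAt g 0) (hg0 : ‖g 0‖ = 1) {C : ℝ≥0∞}
    (h : ∀ s, ∫⁻ t, (‖g (t - s)‖₊ : ℝ≥0∞) ^ 2 ∂ν ≤ C) :
    ∃ δ > 0, ∀ s, ν (ball s δ) ≤ 2 * C := by
  have hg0' : (2⁻¹ : ℝ≥0) < ‖g 0‖₊ ^ 2 := by
    rw [← NNReal.coe_lt_coe]
    norm_num [hg0]
  obtain ⟨δ, hδ, hnear⟩ :=
    Metric.eventually_nhds_iff_ball.1 ((hg.nnnorm.pow 2).eventually_const_lt hg0')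
  refine ⟨δ, hδ, fun s => ?_⟩
  have hle : ∀ t ∈ ball s δ, (2⁻¹ : ℝ≥0∞) ≤ (‖g (t - s)‖₊ : ℝ≥0∞) ^ 2 := fun t ht => by
    have : (2⁻¹ : ℝ≥0) ≤ ‖g (t - s)‖₊ ^ 2 :=
      (hnear (t - s) (by rwa [mem_ball_zero_iff, ← mem_ball_iff_norm])).le
    simpa [ENNReal.coe_inv two_ne_zero] using ENNReal.coe_le_coe.2 this
  calc ν (ball s δ) = 2 * ∫⁻ _ in ball s δ, 2⁻¹ ∂ν := by
        rw [setLIntegral_const, ← mul_assoc,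
          ENNReal.mul_inv_cancel two_ne_zero ENNReal.ofNat_ne_top, one_mul]
    _ ≤ 2 * ∫⁻ t in ball s δ, (‖g (t - s)‖₊ : ℝ≥0∞) ^ 2 ∂ν := by
        gcongr 2 * ?_
        exact setLIntegral_mono' measurableSet_ball hle
    _ ≤ 2 * C := by
        gcongr 2 * ?_
        exact (setLIntegral_le_lintegral _ _).trans (h s)

section Fourier

variable {d : ℕ}

def modulation (s x : Ed d) : ℂ :=
  Complex.exp (↑(2 * π * inner ℝ s x) * Complex.I)

theorem norm_modulation (s x : Ed d) : ‖modulation s x‖ = 1 :=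
  Complex.norm_exp_ofReal_mul_I _

theorem memLp_modulation (μ : Measure (Ed d)) [IsFiniteMeasure μ] (s : Ed d) :
    MemLp (modulation s) 2 μ := by
  refine MemLp.of_bound ?_ 1 (Eventually.of_forall fun x => (norm_modulation s x).le)
  unfold modulation
  fun_prop

theorem lintegral_nnnorm_modulation_sq (μ : Measure (Ed d)) (s : Ed d) :
    ∫⁻ x, (‖modulation s x‖₊ : ℝ≥0∞) ^ 2 ∂μ = μ univ := by
  simp [← enorm_eq_nnnorm, ← ofReal_norm, norm_modulation]

theorem ftm_modulation (μ : Measure (Ed d)) (s t : Ed d) :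
    ftm μ (modulation s) t = charFun μ ((-(2 * π)) • (t - s)) := by
  simp only [ftm, modulation, charFun_apply, ← Complex.exp_add]
  congr 1 with x
  simp only [inner_smul_right, inner_sub_right, real_inner_comm x]
  push_cast
  ring_nf

theorem IsBesselBound.lintegral_charFun_sub_le {μ ν : Measure (Ed d)} [IsProbabilityMeasure μ]
    {B : ℝ} (hν : IsBesselBound μ ν B) (s : Ed d) :
    ∫⁻ t, (‖charFun μ ((-(2 * π)) • (t - s))‖₊ : ℝ≥0∞) ^ 2 ∂ν ≤ ENNReal.ofReal B := by
  simpa [ftm_modulation, lintegral_nnnorm_modulation_sq] using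
    hν (modulation s) (memLp_modulation μ s)

end Fourier

theorem stmt13_general {d : ℕ} (μ ν : Measure (Ed d)) [IsProbabilityMeasure μ]
    (B : ℝ) (hν : IsBesselBound μ ν B) :
    beurlingDim ν ≤ (d : ℝ≥0∞) := by
  have hcont : Continuous fun u : Ed d => charFun μ ((-(2 * π)) • u) :=
    continuous_charFun.comp (continuous_const_smul _)
  have hnorm : ‖charFun μ ((-(2 * π)) • (0 : Ed d))‖ = 1 := by simp
  obtain ⟨δ, hδ, hball⟩ := exists_forall_measure_ball_le_of_lintegral_sub_le ν
    hcont.continuousAt hnorm hν.lintegral_charFun_sub_le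
  exact beurlingDim_le_of_measure_ball_le ν hδ (by finiteness) hball

/-- If `ν` is a Bessel measure for a Borel probability measure `μ` on `ℝ^d`, then
`dim ν ≤ d`. -/
theorem stmt13 {d : ℕ} (μ ν : Measure (Ed d)) [IsProbabilityMeasure μ]
    (B : ℝ) (hB : 0 < B) (hν : IsBesselBound μ ν B) :
    beurlingDim ν ≤ (d : ℝ≥0∞) :=
  stmt13_general μ ν B hν
end
end
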